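/- arXiv:1510.00955 — 10 statements merged into one kernel-verified Lean document; each statement's English description precedes it below -/
import Mathlib

section
/- Let α and β be positive irrational real numbers with 1/α + 1/β = 1. Then every positive integer lies in {⌊nα⌋ : n ∈ ℕ, n ≥ 1} ∪ {⌊nβ⌋ : n ∈ ℕ, n ≥ 1}. -/
theorem exists_nat_floor_mul_eq_of_mem_beattySeq_pos {r : ℝ} {m : ℤ}
    (hm : m ∈ {beattySeq r k | k > 0}) : ∃ n : ℕ, 0 < n ∧ ⌊(n : ℝ) * r⌋ = m := by
  obtain ⟨k, hk, rfl⟩ := hm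
  lift k to ℕ using hk.le
  exact ⟨k, by exact_mod_cast hk, by simp [beattySeq]⟩

theorem beatty_cover_general (α β : ℝ) (hα : 0 < α) (hβ : 0 < β)
    (hirrα : Irrational α)
    (hsum : 1/α + 1/β = 1) :
    ∀ k : ℤ, 0 < k →
      k ∈ {k : ℤ | ∃ n : ℕ, 0 < n ∧ ⌊(n : ℝ) * α⌋ = k} ∪
          {k : ℤ | ∃ n : ℕ, 0 < n ∧ ⌊(n : ℝ) * β⌋ = k} := by
  intro m hm
  have hconj : α.HolderConjugate β :=
    { inv_add_inv_eq_inv := by simpa [one_div] using hsum, left_pos := hα, right_pos := hβ }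
  have hm_symmDiff : m ∈ symmDiff {beattySeq α k | k > 0} {beattySeq β k | k > 0} := by
    rw [hirrα.beattySeq_symmDiff_beattySeq_pos hconj]
    exact hm
  exact (Set.symmDiff_subset_union hm_symmDiff).imp
    exists_nat_floor_mul_eq_of_mem_beattySeq_pos exists_nat_floor_mul_eq_of_mem_beattySeq_pos

theorem beatty_cover (α β : ℝ) (hα : 0 < α) (hβ : 0 < β)
    (hirrα : Irrational α) (hirrβ : Irrational β)
    (hsum : 1/α + 1/β = 1) :
    ∀ k : ℤ, 0 < k →
      k ∈ {k : ℤ | ∃ n : ℕ, 0 < n ∧ ⌊(n : ℝ) * α⌋ = k} ∪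
          {k : ℤ | ∃ n : ℕ, 0 < n ∧ ⌊(n : ℝ) * β⌋ = k} :=
  beatty_cover_general α β hα hβ hirrα hsum
end

section
/- Let α and β be positive irrational real numbers with 1/α + 1/β = 1. Then the sets A = {⌊nα⌋ : n ≥ 1} and B = {⌊nβ⌋ : n ≥ 1} form a partition of the positive integers: A ∩ B = ∅ and A ∪ B = ℕ₊. -/
/-! Mathlib's Rayleigh theorem says that the symmetric difference of the two Beatty sets is the set
of positive integers. Both sets already consist of positive integers when `α, β > 1`, so their
union is contained in their symmetric difference, which forces them to be disjoint. -/

open scoped symmDiff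

theorem Real.holderConjugate_of_pos {p q : ℝ} (hp : 0 < p) (hq : 0 < q)
    (hpq : 1 / p + 1 / q = 1) : p.HolderConjugate q := by
  have hp1 : 1 < p := by
    have : 1 / p < 1 := by linarith [one_div_pos.mpr hq]
    rwa [div_lt_one hp] at this
  exact Real.holderConjugate_iff.mpr ⟨hp1, by simpa only [one_div] using hpq⟩

theorem disjoint_and_sup_eq_of_symmDiff_eq {α : Type*} [GeneralizedBooleanAlgebra α]
    {a b c : α} (h : a ∆ b = c) (ha : a ≤ c) (hb : b ≤ c) : Disjoint a b ∧ a ⊔ b = c := by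
  have hsup : a ∆ b = a ⊔ b := le_antisymm symmDiff_le_sup (h ▸ sup_le ha hb)
  exact ⟨(symmDiff_eq_sup a b).mp hsup, hsup ▸ h⟩

theorem setOf_floor_natCast_mul_eq_beattySeq (r : ℝ) :
    {k : ℤ | ∃ n : ℕ, 0 < n ∧ ⌊(n : ℝ) * r⌋ = k} = {beattySeq r k | k > 0} := by
  ext j
  constructor
  · rintro ⟨n, hn, rfl⟩
    exact ⟨n, by exact_mod_cast hn, by simp [beattySeq]⟩
  · rintro ⟨k, hk, rfl⟩
    lift k to ℕ using hk.le
    exact ⟨k, by exact_mod_cast hk, by simp [beattySeq]⟩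

theorem beattySeq_pos_subset {r : ℝ} (hr : 1 ≤ r) :
    {beattySeq r k | k > 0} ⊆ {n | 0 < n} := by
  rintro _ ⟨k, hk, rfl⟩
  rw [Set.mem_ofPred_eq, beattySeq, Int.floor_pos]
  exact one_le_mul_of_one_le_of_one_le (by exact_mod_cast hk) hr

theorem rayleigh_beatty_general (α β : ℝ) (hα : 0 < α) (hβ : 0 < β)
    (hirrα : Irrational α)
    (hsum : 1/α + 1/β = 1) :
    Disjoint {k : ℤ | ∃ n : ℕ, 0 < n ∧ ⌊(n : ℝ) * α⌋ = k}
             {k : ℤ | ∃ n : ℕ, 0 < n ∧ ⌊(n : ℝ) * β⌋ = k} ∧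
    {k : ℤ | ∃ n : ℕ, 0 < n ∧ ⌊(n : ℝ) * α⌋ = k} ∪
      {k : ℤ | ∃ n : ℕ, 0 < n ∧ ⌊(n : ℝ) * β⌋ = k} = {k : ℤ | 0 < k} := by
  have hαβ := Real.holderConjugate_of_pos hα hβ hsum
  rw [setOf_floor_natCast_mul_eq_beattySeq, setOf_floor_natCast_mul_eq_beattySeq]
  exact disjoint_and_sup_eq_of_symmDiff_eq (hirrα.beattySeq_symmDiff_beattySeq_pos hαβ)
    (beattySeq_pos_subset hαβ.lt.le) (beattySeq_pos_subset hαβ.symm.lt.le)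

theorem rayleigh_beatty (α β : ℝ) (hα : 0 < α) (hβ : 0 < β)
    (hirrα : Irrational α) (hirrβ : Irrational β)
    (hsum : 1/α + 1/β = 1) :
    Disjoint {k : ℤ | ∃ n : ℕ, 0 < n ∧ ⌊(n : ℝ) * α⌋ = k}
             {k : ℤ | ∃ n : ℕ, 0 < n ∧ ⌊(n : ℝ) * β⌋ = k} ∧
    {k : ℤ | ∃ n : ℕ, 0 < n ∧ ⌊(n : ℝ) * α⌋ = k} ∪
      {k : ℤ | ∃ n : ℕ, 0 < n ∧ ⌊(n : ℝ) * β⌋ = k} = {k : ℤ | 0 < k} :=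
  rayleigh_beatty_general α β hα hβ hirrα hsum
end

section
/- Let a₁, …, a_m be positive real numbers such that the sets {⌊n·aᵢ⌋ : n ≥ 1}, for i = 1, …, m, are pairwise disjoint and their union is the set of positive integers. Then either m = 1 and a₁ = 1, or m = 2 and a₁, a₂ are irrational with 1/a₁ + 1/a₂ = 1. -/
/-! For `a ≥ 1`, `⌈x / a⌉ - 1` counts the `n ≥ 1` with `⌊n a⌋ < x`, so the partition hypothesis
gives `∑ ⌈x / aᵢ⌉ = x + m - 1` for every positive integer `x`. Dividing by `x` and letting
`x → ∞` yields `∑ 1 / aᵢ = 1`, hence `∑ (⌈x / aᵢ⌉ - x / aᵢ) = m - 1`. Each of these gaps lies in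
`[0, 1)`, so for `m ≥ 2` no `x / aᵢ` is an integer (every `aᵢ` is irrational) and the fractional
parts `{x / aᵢ}` sum to `1`. If `m ≥ 3`, Dirichlet's approximation theorem gives an `x` with
`{x / a₁}` close to `1`; then `{x / a₂} < 1 / a₂` and `{x / a₃} < 1 / a₃`, which puts `x - 1` in
the sets of both `a₂` and `a₃`. -/

open Finset

def floorMultiples (a : ℝ) : Set ℤ := {k | ∃ n : ℕ, 0 < n ∧ ⌊(n : ℝ) * a⌋ = k}

section FloorMultiples

variable {a : ℝ} {k : ℤ}

lemma mem_floorMultiples_iff :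
    k ∈ floorMultiples a ↔ ∃ n : ℤ, 0 < n ∧ (k : ℝ) ≤ n * a ∧ n * a < k + 1 := by
  simp only [floorMultiples, Set.mem_ofPred_eq, Int.floor_eq_iff]
  constructor
  · rintro ⟨n, hn, h⟩
    exact ⟨n, by exact_mod_cast hn, by exact_mod_cast h⟩
  · rintro ⟨n, hn, h⟩
    lift n to ℕ using hn.le
    exact ⟨n, by exact_mod_cast hn, by exact_mod_cast h⟩

lemma mem_floorMultiples_iff_ceil_lt (ha : 0 < a) (hk : 0 < k) :
    k ∈ floorMultiples a ↔ (⌈(k : ℝ) / a⌉ : ℝ) < ((k : ℝ) + 1) / a := by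
  rw [mem_floorMultiples_iff]
  constructor
  · rintro ⟨n, -, hkn, hnk⟩
    calc (⌈(k : ℝ) / a⌉ : ℝ) ≤ n := by exact_mod_cast Int.ceil_le.2 ((div_le_iff₀ ha).2 hkn)
      _ < ((k : ℝ) + 1) / a := (lt_div_iff₀ ha).2 hnk
  · intro h
    exact ⟨⌈(k : ℝ) / a⌉, Int.ceil_pos.2 (div_pos (by exact_mod_cast hk) ha),
      (div_le_iff₀ ha).1 (Int.le_ceil _), (lt_div_iff₀ ha).1 h⟩

lemma sub_one_mem_floorMultiples {x : ℤ} (ha : 0 < a) (hx : 0 < x)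
    (h0 : 0 < Int.fract ((x : ℝ) / a)) (h1 : Int.fract ((x : ℝ) / a) < 1 / a) :
    x - 1 ∈ floorMultiples a := by
  rw [mem_floorMultiples_iff]
  set n := ⌊(x : ℝ) / a⌋
  have hlo : (x : ℝ) - 1 < n * a := by
    have := mul_lt_mul_of_pos_right h1 ha
    rw [← Int.self_sub_floor, sub_mul, div_mul_cancel₀ _ ha.ne', one_div_mul_cancel ha.ne'] at this
    linarith
  have hhi : n * a < x := by
    have := mul_lt_mul_of_pos_right h0 ha
    rw [← Int.self_sub_floor, sub_mul, div_mul_cancel₀ _ ha.ne', zero_mul] at this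
    linarith
  have hn : (0 : ℝ) < n := by
    have : (1 : ℝ) ≤ x := by exact_mod_cast hx
    exact pos_of_mul_pos_left (by linarith) ha.le
  exact ⟨n, by exact_mod_cast hn, by push_cast; linarith, by push_cast; linarith⟩

end FloorMultiples

lemma ceil_add_eq_ite (y : ℝ) {h : ℝ} (h0 : 0 ≤ h) (h1 : h ≤ 1) :
    ⌈y + h⌉ = if (⌈y⌉ : ℝ) < y + h then ⌈y⌉ + 1 else ⌈y⌉ := by
  have := Int.le_ceil y
  have := Int.ceil_lt_add_one y
  split_ifs with hlt <;> rw [Int.ceil_eq_iff] <;> push_cast <;> constructor <;> linarith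

open scoped Classical in
lemma ceil_add_one_div_sub_ceil_div {a : ℝ} {k : ℤ} (ha : 1 ≤ a) (hk : 0 < k) :
    ⌈((k : ℝ) + 1) / a⌉ - ⌈(k : ℝ) / a⌉ = if k ∈ floorMultiples a then 1 else 0 := by
  have ha0 : 0 < a := one_pos.trans_le ha
  rw [add_div, ceil_add_eq_ite _ (by positivity) ((div_le_one ha0).2 ha), ← add_div]
  simp only [← mem_floorMultiples_iff_ceil_lt ha0 hk]
  split_ifs <;> ring

lemma nonpos_of_forall_nat_mul_le {c C : ℝ} (h : ∀ n : ℕ, 0 < n → n * c ≤ C) : c ≤ 0 := by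
  by_contra! hc
  obtain ⟨n, hn⟩ := exists_nat_gt (C / c)
  have := h (n + 1) n.succ_pos
  rw [div_lt_iff₀ hc] at hn
  push_cast at this
  nlinarith

lemma fract_ne_zero_of_sum_ceil_sub_eq {ι : Type*} [Fintype ι] {y : ι → ℝ}
    (hcard : 2 ≤ Fintype.card ι) (hy : ∑ i, ((⌈y i⌉ : ℝ) - y i) = Fintype.card ι - 1) (i : ι) :
    Int.fract (y i) ≠ 0 := by
  classical
  intro h0
  obtain ⟨z, hz⟩ := Int.fract_eq_zero_iff.1 h0
  have hothers : ∑ j ∈ univ.erase i, ((⌈y j⌉ : ℝ) - y j) < #(univ.erase i) := by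
    rw [← nsmul_one, ← sum_const]
    refine sum_lt_sum_of_nonempty ?_ fun j _ => by linarith [Int.ceil_lt_add_one (y j)]
    rw [← card_pos, card_erase_of_mem (mem_univ i), card_univ]
    omega
  rw [← add_sum_erase _ _ (mem_univ i), ← hz, Int.ceil_intCast, sub_self, zero_add] at hy
  rw [card_erase_of_mem (mem_univ i), card_univ, Nat.cast_sub (by omega)] at hothers
  push_cast at hothers
  linarith

lemma sum_fract_eq_one_of_sum_ceil_sub_eq {ι : Type*} [Fintype ι] {y : ι → ℝ}
    (hcard : 2 ≤ Fintype.card ι) (hy : ∑ i, ((⌈y i⌉ : ℝ) - y i) = Fintype.card ι - 1) :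
    ∑ i, Int.fract (y i) = 1 := by
  have hfract : ∀ i, Int.fract (y i) = 1 - ((⌈y i⌉ : ℝ) - y i) := fun i =>
    ((Int.fract_eq_zero_or_add_one_sub_ceil (y i)).resolve_left
      (fract_ne_zero_of_sum_ceil_sub_eq hcard hy i)).trans (by ring)
  simp only [hfract, sum_sub_distrib, hy, sum_const, card_univ, nsmul_eq_mul, mul_one]
  ring

lemma irrational_of_forall_fract_mul_ne_zero {ξ : ℝ}
    (h : ∀ n : ℤ, 0 < n → Int.fract (n * ξ) ≠ 0) : Irrational ξ := by
  rintro ⟨q, rfl⟩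
  apply h q.den (by exact_mod_cast q.den_pos)
  have : ((q.den : ℤ) : ℝ) * q = q.num := by exact_mod_cast (mul_comm _ _).trans q.mul_den_eq_num
  rw [this, Int.fract_intCast]

lemma exists_pos_int_mul_mem_Ico {η : ℝ} (h0 : 0 < η) (h1 : η < 1) :
    ∃ K : ℤ, 0 < K ∧ 1 - η ≤ K * η ∧ K * η < 1 := by
  have hceil := Int.le_ceil η⁻¹
  refine ⟨⌈η⁻¹⌉ - 1, ?_, ?_, ?_⟩
  · have : ((1 : ℤ) : ℝ) < η⁻¹ := by push_cast; exact one_lt_inv₀ h0 |>.2 h1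
    have := Int.lt_ceil.2 this
    omega
  · push_cast
    calc 1 - η = (η⁻¹ - 1) * η := by field_simp
      _ ≤ (⌈η⁻¹⌉ - 1) * η := by gcongr
  · push_cast
    calc (⌈η⁻¹⌉ - 1 : ℝ) * η < η⁻¹ * η := by gcongr; linarith [Int.ceil_lt_add_one η⁻¹]
      _ = 1 := inv_mul_cancel₀ h0.ne'

lemma Irrational.exists_one_sub_lt_fract_mul {ξ : ℝ} (hξ : Irrational ξ) {δ : ℝ} (hδ : 0 < δ) :
    ∃ x : ℤ, 0 < x ∧ 1 - δ < Int.fract (x * ξ) := by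
  obtain ⟨N, hN⟩ := exists_nat_one_div_lt (lt_min hδ one_pos)
  obtain ⟨j, k, hk, -, hjk⟩ := Real.exists_int_int_abs_mul_sub_le ξ N.succ_pos
  set ε := k * ξ - j
  have hε : |ε| < min δ 1 := by
    refine hjk.trans_lt (lt_of_le_of_lt ?_ hN)
    gcongr
    linarith
  rw [lt_min_iff, abs_lt, abs_lt] at hε
  have hε0 : ε ≠ 0 := sub_ne_zero.2 ((hξ.intCast_mul hk.ne').ne_int j)
  rcases hε0.lt_or_gt with hneg | hpos
  · refine ⟨k, hk, ?_⟩
    have hfract : Int.fract ((k : ℝ) * ξ) = 1 + ε :=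
      Int.fract_eq_iff.2 ⟨by linarith, by linarith, j - 1, by push_cast; ring⟩
    linarith
  · obtain ⟨K, hK, hK1, hK2⟩ := exists_pos_int_mul_mem_Ico hpos hε.2.2
    refine ⟨K * k, mul_pos hK hk, ?_⟩
    have hKpos : (0 : ℝ) < K := by exact_mod_cast hK
    have hfract : Int.fract (((K * k : ℤ) : ℝ) * ξ) = K * ε :=
      Int.fract_eq_iff.2 ⟨by positivity, hK2, K * j, by push_cast; ring⟩
    linarith

section Partition

variable {ι : Type*} [Fintype ι] {a : ι → ℝ}

lemma sum_ceil_div_eq_of_partition (ha : ∀ i, 1 ≤ a i)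
    (hpart : ∀ k : ℤ, 0 < k → ∃! i, k ∈ floorMultiples (a i)) {x : ℤ} (hx : 0 < x) :
    ∑ i, ⌈(x : ℝ) / a i⌉ = x + Fintype.card ι - 1 := by
  classical
  have hx1 : 1 ≤ x := hx
  clear hx
  induction x, hx1 using Int.leInduction with
  | base =>
    have hone : ∀ i, ⌈((1 : ℤ) : ℝ) / a i⌉ = 1 := fun i => by
      have hai := one_pos.trans_le (ha i)
      rw [Int.ceil_eq_iff, Int.cast_one, sub_self]
      exact ⟨div_pos one_pos hai, (div_le_one₀ hai).2 (ha i)⟩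
    rw [sum_congr rfl fun i _ => hone i]
    simp
  | succ n hn ih =>
    obtain ⟨i₀, hi₀, huniq⟩ := hpart n hn
    have hmem : ∀ i, n ∈ floorMultiples (a i) ↔ i = i₀ :=
      fun i => ⟨huniq i, by rintro rfl; exact hi₀⟩
    calc ∑ i, ⌈((n + 1 : ℤ) : ℝ) / a i⌉
        = ∑ i, ⌈(n : ℝ) / a i⌉ + ∑ i, (⌈((n : ℝ) + 1) / a i⌉ - ⌈(n : ℝ) / a i⌉) := by
          rw [← sum_add_distrib]; push_cast; simp
      _ = n + 1 + Fintype.card ι - 1 := by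
          rw [ih]
          simp only [ceil_add_one_div_sub_ceil_div (ha _) hn, hmem]
          simp
          ring

lemma sum_one_div_eq_one_of_sum_ceil_div
    (hceil : ∀ x : ℤ, 0 < x → ∑ i, ⌈(x : ℝ) / a i⌉ = x + Fintype.card ι - 1) :
    ∑ i, 1 / a i = 1 := by
  set s := ∑ i, 1 / a i
  have hbounds : ∀ n : ℕ, 0 < n →
      n * s ≤ n + Fintype.card ι - 1 ∧ n + Fintype.card ι - 1 ≤ n * s + Fintype.card ι := by
    intro n hn
    have h := congrArg (Int.cast : ℤ → ℝ) (hceil n (by exact_mod_cast hn))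
    push_cast at h
    have hs : (n : ℝ) * s = ∑ i, (n : ℝ) / a i := by simp only [s, mul_sum, mul_one_div]
    rw [hs, ← h]
    refine ⟨sum_le_sum fun i _ => Int.le_ceil _, ?_⟩
    calc ∑ i, (⌈(n : ℝ) / a i⌉ : ℝ) ≤ ∑ i, ((n : ℝ) / a i + 1) :=
          sum_le_sum fun i _ => (Int.ceil_lt_add_one _).le
      _ = ∑ i, (n : ℝ) / a i + Fintype.card ι := by simp [sum_add_distrib]
  have hle : s - 1 ≤ 0 := nonpos_of_forall_nat_mul_le fun n hn => by
    rw [mul_sub, mul_one]; linarith [(hbounds n hn).1]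
  have hge : 1 - s ≤ 0 := nonpos_of_forall_nat_mul_le (C := 1) fun n hn => by
    rw [mul_sub, mul_one]; linarith [(hbounds n hn).2]
  linarith

lemma sum_ceil_div_sub_div_of_sum_ceil_div
    (hceil : ∀ x : ℤ, 0 < x → ∑ i, ⌈(x : ℝ) / a i⌉ = x + Fintype.card ι - 1) {x : ℤ} (hx : 0 < x) :
    ∑ i, ((⌈(x : ℝ) / a i⌉ : ℝ) - x / a i) = Fintype.card ι - 1 := by
  have h := congrArg (Int.cast : ℤ → ℝ) (hceil x hx)
  push_cast at h
  have hs : ∑ i, (x : ℝ) / a i = x := by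
    calc ∑ i, (x : ℝ) / a i = x * ∑ i, 1 / a i := by simp only [mul_sum, mul_one_div]
      _ = x := by rw [sum_one_div_eq_one_of_sum_ceil_div hceil, mul_one]
  rw [sum_sub_distrib, h, hs]
  ring

lemma irrational_of_sum_ceil_div
    (hceil : ∀ x : ℤ, 0 < x → ∑ i, ⌈(x : ℝ) / a i⌉ = x + Fintype.card ι - 1)
    (hcard : 2 ≤ Fintype.card ι) (i : ι) : Irrational (a i) :=
  Irrational.of_inv <| irrational_of_forall_fract_mul_ne_zero fun x hx => by
    rw [← div_eq_mul_inv]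
    exact fract_ne_zero_of_sum_ceil_sub_eq hcard (sum_ceil_div_sub_div_of_sum_ceil_div hceil hx) i

lemma card_le_two_of_sum_ceil_div (ha : ∀ i, 0 < a i)
    (hdisj : ∀ i j, i ≠ j → Disjoint (floorMultiples (a i)) (floorMultiples (a j)))
    (hceil : ∀ x : ℤ, 0 < x → ∑ i, ⌈(x : ℝ) / a i⌉ = x + Fintype.card ι - 1) :
    Fintype.card ι ≤ 2 := by
  classical
  by_contra! hcard
  obtain ⟨i, j, k, hij, hik, hjk⟩ := Fintype.two_lt_card_iff.1 hcard
  have hgap := fun x (hx : 0 < x) => sum_ceil_div_sub_div_of_sum_ceil_div hceil hx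
  have hirr := (irrational_of_sum_ceil_div hceil hcard.le i).inv
  obtain ⟨x, hx, hxi⟩ := hirr.exists_one_sub_lt_fract_mul
    (lt_min (one_div_pos.2 (ha j)) (one_div_pos.2 (ha k)))
  rw [← div_eq_mul_inv] at hxi
  have hsum := sum_fract_eq_one_of_sum_ceil_sub_eq hcard.le (hgap x hx)
  have hthree : Int.fract ((x : ℝ) / a i) + Int.fract ((x : ℝ) / a j)
      + Int.fract ((x : ℝ) / a k) ≤ 1 := by
    rw [← hsum]
    have := sum_le_sum_of_subset_of_nonneg (subset_univ {i, j, k})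
      fun l _ _ => Int.fract_nonneg ((x : ℝ) / a l)
    rwa [sum_insert (by simp [hij, hik]), sum_insert (by simp [hjk]), sum_singleton,
      ← add_assoc] at this
  have hmem : ∀ l, Int.fract ((x : ℝ) / a l) < 1 / a l → x - 1 ∈ floorMultiples (a l) :=
    fun l hl => sub_one_mem_floorMultiples (ha l) hx
      ((Int.fract_nonneg _).lt_of_ne' (fract_ne_zero_of_sum_ceil_sub_eq hcard.le (hgap x hx) l)) hl
  have hj := Int.fract_nonneg ((x : ℝ) / a j)
  have hk := Int.fract_nonneg ((x : ℝ) / a k)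
  have hδj := min_le_left (1 / a j) (1 / a k)
  have hδk := min_le_right (1 / a j) (1 / a k)
  exact Set.disjoint_left.1 (hdisj j k hjk) (hmem j (by linarith)) (hmem k (by linarith))

end Partition

theorem uspensky_general (m : ℕ) (a : Fin m → ℝ)
    (hdisj : ∀ i j : Fin m, i ≠ j →
      Disjoint {k : ℤ | ∃ n : ℕ, 0 < n ∧ ⌊(n : ℝ) * a i⌋ = k}
               {k : ℤ | ∃ n : ℕ, 0 < n ∧ ⌊(n : ℝ) * a j⌋ = k})
    (hcover : (⋃ i : Fin m, {k : ℤ | ∃ n : ℕ, 0 < n ∧ ⌊(n : ℝ) * a i⌋ = k})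
        = {k : ℤ | 0 < k}) :
    (m = 1 ∧ ∀ i, a i = 1) ∨
      (m = 2 ∧ (∀ i, Irrational (a i)) ∧ ∑ i, 1 / a i = 1) := by
  have ha : ∀ i, 1 ≤ a i := fun i => by
    have : ⌊a i⌋ ∈ {k : ℤ | 0 < k} := hcover ▸ Set.mem_iUnion.2 ⟨i, 1, one_pos, by simp⟩
    exact Int.floor_pos.1 this
  have hpart : ∀ k : ℤ, 0 < k → ∃! i, k ∈ floorMultiples (a i) := fun k hk => by
    obtain ⟨i, hi⟩ := Set.mem_iUnion.1 (hcover ▸ hk : k ∈ ⋃ i, floorMultiples (a i))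
    exact ⟨i, hi, fun j hj => by_contra fun hji => Set.disjoint_left.1 (hdisj j i hji) hj hi⟩
  have hceil := fun x (hx : 0 < x) => sum_ceil_div_eq_of_partition ha hpart hx
  have hsum := sum_one_div_eq_one_of_sum_ceil_div hceil
  have hcard := card_le_two_of_sum_ceil_div (fun i => one_pos.trans_le (ha i)) hdisj hceil
  rw [Fintype.card_fin] at hcard
  interval_cases m
  · simp at hsum
  · exact Or.inl ⟨rfl, fun i => by simpa [Subsingleton.elim i 0] using hsum⟩
  · exact Or.inr ⟨rfl, irrational_of_sum_ceil_div hceil (by simp), hsum⟩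

theorem uspensky (m : ℕ) (hm : 0 < m) (a : Fin m → ℝ) (ha : ∀ i, 0 < a i)
    (hdisj : ∀ i j : Fin m, i ≠ j →
      Disjoint {k : ℤ | ∃ n : ℕ, 0 < n ∧ ⌊(n : ℝ) * a i⌋ = k}
               {k : ℤ | ∃ n : ℕ, 0 < n ∧ ⌊(n : ℝ) * a j⌋ = k})
    (hcover : (⋃ i : Fin m, {k : ℤ | ∃ n : ℕ, 0 < n ∧ ⌊(n : ℝ) * a i⌋ = k})
        = {k : ℤ | 0 < k}) :
    (m = 1 ∧ ∀ i, a i = 1) ∨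
      (m = 2 ∧ (∀ i, Irrational (a i)) ∧ ∑ i, 1 / a i = 1) :=
  uspensky_general m a hdisj hcover
end

section
/- There do not exist three positive real numbers a₁, a₂, a₃ such that the sets {⌊n·aᵢ⌋ : n ≥ 1}, i = 1, 2, 3, partition the set of positive integers. -/
open Finset

private lemma floor_lt_floor_of_lt {x : ℝ} (hx : 1 < x) {n m : ℕ} (h : n < m) :
    ⌊(n : ℝ) * x⌋ < ⌊(m : ℝ) * x⌋ := by
  have h1 : (n : ℝ) + 1 ≤ m := by exact_mod_cast h
  have hx0 : (0 : ℝ) < x := by linarith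
  have h2 : (n : ℝ) * x + 1 ≤ (m : ℝ) * x := by nlinarith
  calc ⌊(n : ℝ) * x⌋ < ⌊(n : ℝ) * x⌋ + 1 := by omega
    _ = ⌊(n : ℝ) * x + 1⌋ := (Int.floor_add_one _).symm
    _ ≤ ⌊(m : ℝ) * x⌋ := Int.floor_le_floor h2

private lemma abs_sub_lt_one_of_floor_eq {u v : ℝ} (h : ⌊u⌋ = ⌊v⌋) : |u - v| < 1 := by
  have h' : ((⌊u⌋ : ℤ) : ℝ) = ((⌊v⌋ : ℤ) : ℝ) := by exact_mod_cast h
  have h1 := Int.floor_le u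
  have h2 := Int.lt_floor_add_one u
  have h3 := Int.floor_le v
  have h4 := Int.lt_floor_add_one v
  rw [abs_sub_lt_iff]
  constructor <;> linarith

private lemma pigeon3 (x y z : ℝ) (m : ℕ) (hm : 0 < m) :
    ∃ (N : ℕ) (p q r : ℤ), 0 < N ∧
      |(N : ℝ) * x - p| < 1 / m ∧ |(N : ℝ) * y - q| < 1 / m ∧ |(N : ℝ) * z - r| < 1 / m := by
  have hmr : (0 : ℝ) < m := by exact_mod_cast hm
  set f : ℕ → ℕ × ℕ × ℕ := fun n =>
    (⌊Int.fract ((n : ℝ) * x) * m⌋.toNat, ⌊Int.fract ((n : ℝ) * y) * m⌋.toNat,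
      ⌊Int.fract ((n : ℝ) * z) * m⌋.toNat) with hf
  have hbox : ∀ (w : ℝ) (n : ℕ), ⌊Int.fract ((n : ℝ) * w) * m⌋.toNat < m := by
    intro w n
    have h1 : Int.fract ((n : ℝ) * w) * m < m := by
      nlinarith [Int.fract_lt_one ((n : ℝ) * w), Int.fract_nonneg ((n : ℝ) * w)]
    have h2 : ⌊Int.fract ((n : ℝ) * w) * m⌋ < (m : ℤ) := Int.floor_lt.mpr (by exact_mod_cast h1)
    omega
  have hmaps : ∀ n ∈ Finset.range (m ^ 3 + 1), f n ∈
      Finset.range m ×ˢ Finset.range m ×ˢ Finset.range m := by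
    intro n _
    simp only [hf, Finset.mem_product, Finset.mem_range]
    exact ⟨hbox x n, hbox y n, hbox z n⟩
  have hcard : (Finset.range m ×ˢ Finset.range m ×ˢ Finset.range m).card <
      (Finset.range (m ^ 3 + 1)).card := by
    simp only [Finset.card_product, Finset.card_range]
    have : m * (m * m) = m ^ 3 := by ring
    omega
  obtain ⟨n1, _, n2, _, hne, hfe⟩ :=
    Finset.exists_ne_map_eq_of_card_lt_of_maps_to hcard hmaps
  have key : ∀ a b : ℕ, a < b → f a = f b →
      ∃ (N : ℕ) (p q r : ℤ), 0 < N ∧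
        |(N : ℝ) * x - p| < 1 / m ∧ |(N : ℝ) * y - q| < 1 / m ∧ |(N : ℝ) * z - r| < 1 / m := by
    intro a b hab hfab
    have close : ∀ w : ℝ, ⌊Int.fract ((a : ℝ) * w) * m⌋.toNat = ⌊Int.fract ((b : ℝ) * w) * m⌋.toNat →
        |((b : ℝ) - a) * w - (⌊(b : ℝ) * w⌋ - ⌊(a : ℝ) * w⌋ : ℤ)| < 1 / m := by
      intro w hw
      have hfl : ⌊Int.fract ((a : ℝ) * w) * m⌋ = ⌊Int.fract ((b : ℝ) * w) * m⌋ := by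
        have ha0 : 0 ≤ ⌊Int.fract ((a : ℝ) * w) * m⌋ :=
          Int.floor_nonneg.mpr (mul_nonneg (Int.fract_nonneg _) hmr.le)
        have hb0 : 0 ≤ ⌊Int.fract ((b : ℝ) * w) * m⌋ :=
          Int.floor_nonneg.mpr (mul_nonneg (Int.fract_nonneg _) hmr.le)
        omega
      have h1 : |Int.fract ((a : ℝ) * w) * m - Int.fract ((b : ℝ) * w) * m| < 1 :=
        abs_sub_lt_one_of_floor_eq hfl
      have h2 : |Int.fract ((a : ℝ) * w) - Int.fract ((b : ℝ) * w)| < 1 / m := by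
        rw [lt_div_iff₀ hmr]
        have he : |Int.fract ((a:ℝ)*w) - Int.fract ((b:ℝ)*w)| * m
            = |Int.fract ((a:ℝ)*w) * m - Int.fract ((b:ℝ)*w) * m| := by
          rw [← sub_mul, abs_mul, abs_of_pos hmr]
        rw [he]; exact h1
      have h3 : ((b : ℝ) - a) * w - (⌊(b : ℝ) * w⌋ - ⌊(a : ℝ) * w⌋ : ℤ) =
          Int.fract ((b : ℝ) * w) - Int.fract ((a : ℝ) * w) := by
        simp only [Int.fract]
        push_cast
        ring
      rw [h3, ← abs_neg]
      simpa [neg_sub] using h2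
    have h1 : f a = f b := hfab
    simp only [hf, Prod.mk.injEq] at h1
    refine ⟨b - a, ⌊(b : ℝ) * x⌋ - ⌊(a : ℝ) * x⌋, ⌊(b : ℝ) * y⌋ - ⌊(a : ℝ) * y⌋,
      ⌊(b : ℝ) * z⌋ - ⌊(a : ℝ) * z⌋, by omega, ?_, ?_, ?_⟩
    · have := close x h1.1
      rw [Nat.cast_sub hab.le]; exact this
    · have := close y h1.2.1
      rw [Nat.cast_sub hab.le]; exact this
    · have := close z h1.2.2
      rw [Nat.cast_sub hab.le]; exact this
  rcases lt_or_gt_of_ne hne with h | h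
  · exact key n1 n2 h hfe
  · exact key n2 n1 h hfe.symm

private lemma sum_eq_one (b₀ b₁ b₂ : ℝ)
    (H : ∀ M : ℤ, 1 ≤ M → ⌈(M : ℝ) * b₀⌉ + ⌈(M : ℝ) * b₁⌉ + ⌈(M : ℝ) * b₂⌉ = M + 2) :
    b₀ + b₁ + b₂ = 1 := by
  have key : ∀ M : ℤ, 1 ≤ M →
      ((M : ℝ) * (b₀ + b₁ + b₂) ≤ M + 2 ∧ (M : ℝ) + 2 < M * (b₀ + b₁ + b₂) + 3) := by
    intro M hM
    have hcast : ((⌈(M : ℝ) * b₀⌉ + ⌈(M : ℝ) * b₁⌉ + ⌈(M : ℝ) * b₂⌉ : ℤ) : ℝ) = (M : ℝ) + 2 := by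
      rw [H M hM]; push_cast; ring
    push_cast at hcast
    have l0 := Int.le_ceil ((M : ℝ) * b₀)
    have l1 := Int.le_ceil ((M : ℝ) * b₁)
    have l2 := Int.le_ceil ((M : ℝ) * b₂)
    have u0 := Int.ceil_lt_add_one ((M : ℝ) * b₀)
    have u1 := Int.ceil_lt_add_one ((M : ℝ) * b₁)
    have u2 := Int.ceil_lt_add_one ((M : ℝ) * b₂)
    constructor <;> nlinarith
  by_contra hne
  rcases lt_or_gt_of_ne hne with h | h
  · have hs : (0 : ℝ) < 1 - (b₀ + b₁ + b₂) := by linarith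
    obtain ⟨n, hn⟩ := exists_nat_gt (1 / (1 - (b₀ + b₁ + b₂)))
    have hn0 : (0 : ℝ) < n := lt_trans (by positivity) hn
    have hn1 : (1 : ℤ) ≤ (n : ℤ) := by exact_mod_cast Nat.one_le_iff_ne_zero.mpr (by
      intro hh; rw [hh] at hn0; norm_num at hn0)
    have hk := (key (n : ℤ) hn1).2
    push_cast at hk
    have : 1 < (n : ℝ) * (1 - (b₀ + b₁ + b₂)) := (div_lt_iff₀ hs).mp hn
    nlinarith
  · have hs : (0 : ℝ) < (b₀ + b₁ + b₂) - 1 := by linarith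
    obtain ⟨n, hn⟩ := exists_nat_gt (2 / ((b₀ + b₁ + b₂) - 1))
    have hn0 : (0 : ℝ) < n := lt_trans (by positivity) hn
    have hn1 : (1 : ℤ) ≤ (n : ℤ) := by exact_mod_cast Nat.one_le_iff_ne_zero.mpr (by
      intro hh; rw [hh] at hn0; norm_num at hn0)
    have hk := (key (n : ℤ) hn1).1
    push_cast at hk
    have : 2 < (n : ℝ) * ((b₀ + b₁ + b₂) - 1) := (div_lt_iff₀ hs).mp hn
    nlinarith

set_option maxHeartbeats 2000000 in
private lemma no_three (b₀ b₁ b₂ : ℝ) (h₀ : 0 < b₀) (h₀' : b₀ < 1) (h₁ : 0 < b₁)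
    (h₁' : b₁ < 1) (h₂ : 0 < b₂) (h₂' : b₂ < 1)
    (H : ∀ M : ℤ, 1 ≤ M → ⌈(M : ℝ) * b₀⌉ + ⌈(M : ℝ) * b₁⌉ + ⌈(M : ℝ) * b₂⌉ = M + 2) :
    False := by
  have hs := sum_eq_one b₀ b₁ b₂ H
  obtain ⟨δ, hδpos, d13, d0, d0', d1, d1', d2, d2'⟩ :
      ∃ δ : ℝ, 0 < δ ∧ δ ≤ 1/3 ∧ δ ≤ b₀ ∧ δ ≤ 1 - b₀ ∧ δ ≤ b₁ ∧ δ ≤ 1 - b₁ ∧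
        δ ≤ b₂ ∧ δ ≤ 1 - b₂ := by
    refine ⟨min (1/3) (min (min b₀ (1 - b₀)) (min (min b₁ (1 - b₁)) (min b₂ (1 - b₂)))),
      ?_, min_le_left _ _, ?_, ?_, ?_, ?_, ?_, ?_⟩
    · simp only [lt_min_iff]
      refine ⟨by norm_num, ⟨h₀, by linarith⟩, ⟨h₁, by linarith⟩, h₂, by linarith⟩
    · exact (min_le_right _ _).trans ((min_le_left _ _).trans (min_le_left _ _))
    · exact (min_le_right _ _).trans ((min_le_left _ _).trans (min_le_right _ _))
    · exact (min_le_right _ _).trans ((min_le_right _ _).trans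
        ((min_le_left _ _).trans (min_le_left _ _)))
    · exact (min_le_right _ _).trans ((min_le_right _ _).trans
        ((min_le_left _ _).trans (min_le_right _ _)))
    · exact (min_le_right _ _).trans ((min_le_right _ _).trans
        ((min_le_right _ _).trans (min_le_left _ _)))
    · exact (min_le_right _ _).trans ((min_le_right _ _).trans
        ((min_le_right _ _).trans (min_le_right _ _)))
  obtain ⟨m, hm⟩ := exists_nat_gt (2 / δ)
  have hm0 : 0 < m := by
    have h1 : (0 : ℝ) < 2 / δ := by positivity
    have h2 : (0 : ℝ) < m := lt_trans h1 hm
    exact_mod_cast h2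
  have hmr : (0 : ℝ) < m := by exact_mod_cast hm0
  have h2m : 2 / (m : ℝ) < δ := by
    rw [div_lt_iff₀ hmr]
    have := (div_lt_iff₀ hδpos).mp hm
    linarith
  have hkey : (2:ℝ) / m = 2 * (1 / m) := by ring
  obtain ⟨N, p, q, r, hN, hx, hy, hz⟩ := pigeon3 b₀ b₁ b₂ m hm0
  have hM1 : (1 : ℤ) ≤ 2 * (N : ℤ) - 1 := by omega
  have hax := abs_lt.mp hx
  have hay := abs_lt.mp hy
  have haz := abs_lt.mp hz
  have ceil : ∀ (w : ℝ) (s : ℤ), 0 < w → w < 1 → δ ≤ w → δ ≤ 1 - w →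
      -(1/(m:ℝ)) < (N : ℝ) * w - s → (N : ℝ) * w - s < 1/(m:ℝ) →
      ⌈((2 * (N : ℤ) - 1 : ℤ) : ℝ) * w⌉ = 2 * s := by
    intro w s hw hw1 hdw hdw' hl hu
    have e : ((2 * (N : ℤ) - 1 : ℤ) : ℝ) * w = (2 * ((N : ℝ) * w - s) - w) + ((2 * s : ℤ) : ℝ) := by
      push_cast
      ring
    rw [e, Int.ceil_add_intCast]
    have hz' : ⌈2 * ((N : ℝ) * w - s) - w⌉ = 0 := by
      rw [Int.ceil_eq_zero_iff, Set.mem_Ioc]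
      constructor
      · linarith [hkey]
      · linarith [hkey]
    omega
  have c0 := ceil b₀ p h₀ h₀' d0 d0' hax.1 hax.2
  have c1 := ceil b₁ q h₁ h₁' d1 d1' hay.1 hay.2
  have c2 := ceil b₂ r h₂ h₂' d2 d2' haz.1 haz.2
  have HM := H (2 * (N : ℤ) - 1) hM1
  rw [c0, c1, c2] at HM
  have hcast : ((2 * p + 2 * q + 2 * r : ℤ) : ℝ) = 2 * (N : ℝ) + 1 := by
    rw [HM]
    push_cast
    ring
  push_cast at hcast
  have hNsum : (N : ℝ) * b₀ + (N : ℝ) * b₁ + (N : ℝ) * b₂ = (N : ℝ) := by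
    have h1 : (N : ℝ) * (b₀ + b₁ + b₂) = (N : ℝ) * 1 := by rw [hs]
    nlinarith [h1]
  nlinarith [hax.1, hay.1, haz.1, hNsum, hkey, d13, h2m, hcast]

set_option maxHeartbeats 1000000 in
theorem no_three_beatty_partition :
    ¬ ∃ a : Fin 3 → ℝ, (∀ i, 0 < a i) ∧
      (∀ i j : Fin 3, i ≠ j →
        Disjoint {k : ℤ | ∃ n : ℕ, 0 < n ∧ ⌊(n : ℝ) * a i⌋ = k}
                 {k : ℤ | ∃ n : ℕ, 0 < n ∧ ⌊(n : ℝ) * a j⌋ = k}) ∧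
      (⋃ i : Fin 3, {k : ℤ | ∃ n : ℕ, 0 < n ∧ ⌊(n : ℝ) * a i⌋ = k})
        = {k : ℤ | 0 < k} := by
  rintro ⟨a, hpos, hdisj, hunion⟩
  have hBpos : ∀ (i : Fin 3) (k : ℤ), (∃ n : ℕ, 0 < n ∧ ⌊(n : ℝ) * a i⌋ = k) → 0 < k := by
    intro i k hk
    have hmem : k ∈ ⋃ i : Fin 3, {k : ℤ | ∃ n : ℕ, 0 < n ∧ ⌊(n : ℝ) * a i⌋ = k} :=
      Set.mem_iUnion.mpr ⟨i, hk⟩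
    rw [hunion] at hmem
    exact hmem
  have hge1 : ∀ i, 1 ≤ a i := by
    intro i
    by_contra h
    push_neg at h
    have h0 : ⌊((1 : ℕ) : ℝ) * a i⌋ = 0 := by
      rw [Int.floor_eq_zero_iff]
      constructor
      · simpa using (hpos i).le
      · simpa using h
    have := hBpos i 0 ⟨1, one_pos, h0⟩
    exact lt_irrefl 0 this
  have hgt1 : ∀ i, 1 < a i := by
    intro i
    rcases lt_or_eq_of_le (hge1 i) with h | h
    · exact h
    · exfalso
      obtain ⟨j, hj⟩ := exists_ne i
      set k : ℤ := ⌊((1 : ℕ) : ℝ) * a j⌋ with hk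
      have hkj : ∃ n : ℕ, 0 < n ∧ ⌊(n : ℝ) * a j⌋ = k := ⟨1, one_pos, rfl⟩
      have hk1 : 0 < k := hBpos j k hkj
      have hki : ∃ n : ℕ, 0 < n ∧ ⌊(n : ℝ) * a i⌋ = k := by
        refine ⟨k.toNat, by omega, ?_⟩
        rw [← h]
        rw [mul_one]
        rw [Int.floor_natCast]
        omega
      exact Set.disjoint_left.mp (hdisj i j (Ne.symm hj)) hki hkj
  have hcount : ∀ M : ℤ, 1 ≤ M →
      ⌈(M : ℝ) * (a 0)⁻¹⌉ + ⌈(M : ℝ) * (a 1)⁻¹⌉ + ⌈(M : ℝ) * (a 2)⁻¹⌉ = M + 2 := by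
    intro M hM
    have hMr : (0 : ℝ) < M := by exact_mod_cast hM
    set c : Fin 3 → ℤ := fun i => ⌈(M : ℝ) * (a i)⁻¹⌉ - 1 with hc
    have hc0 : ∀ i, 0 ≤ c i := by
      intro i
      have h1 : (0 : ℝ) < (M : ℝ) * (a i)⁻¹ :=
        mul_pos hMr (inv_pos.mpr (hpos i))
      have := Int.ceil_pos.mpr h1
      simp only [hc]
      omega
    set F : Fin 3 → Finset ℤ :=
      fun i => (Finset.Icc 1 (c i).toNat).image (fun n : ℕ => ⌊(n : ℝ) * a i⌋) with hF
    have hmem : ∀ (i : Fin 3) (k : ℤ), k ∈ F i ↔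
        ((∃ n : ℕ, 0 < n ∧ ⌊(n : ℝ) * a i⌋ = k) ∧ 1 ≤ k ∧ k ≤ M - 1) := by
      intro i k
      simp only [hF, Finset.mem_image, Finset.mem_Icc]
      constructor
      · rintro ⟨n, ⟨hn1, hn2⟩, rfl⟩
        have han : (1 : ℝ) ≤ (n : ℝ) := by exact_mod_cast hn1
        refine ⟨⟨n, hn1, rfl⟩, ?_, ?_⟩
        · have hna : (1 : ℝ) ≤ (n : ℝ) * a i := by nlinarith [hgt1 i]
          exact Int.le_floor.mpr (by exact_mod_cast hna)
        · have hnc : (n : ℝ) ≤ ((c i).toNat : ℝ) := by exact_mod_cast hn2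
          have h2 : ((c i).toNat : ℝ) = ((c i : ℤ) : ℝ) := by
            exact_mod_cast Int.toNat_of_nonneg (hc0 i)
          have h3 : ((c i : ℤ) : ℝ) < (M : ℝ) * (a i)⁻¹ := by
            have := Int.ceil_lt_add_one ((M : ℝ) * (a i)⁻¹)
            simp only [hc]
            push_cast
            linarith
          have h5 : (n : ℝ) < (M : ℝ) * (a i)⁻¹ := by linarith
          have h4 : (n : ℝ) * a i < (M : ℝ) := by
            have := mul_lt_mul_of_pos_right h5 (hpos i)
            rwa [mul_assoc, inv_mul_cancel₀ (ne_of_gt (hpos i)), mul_one] at this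
          have := Int.floor_lt.mpr h4
          omega
      · rintro ⟨⟨n, hn1, rfl⟩, hk1, hk2⟩
        refine ⟨n, ⟨hn1, ?_⟩, rfl⟩
        have hfl : ((⌊(n : ℝ) * a i⌋ : ℤ) : ℝ) ≤ (M : ℝ) - 1 := by
          have : (⌊(n : ℝ) * a i⌋ : ℤ) ≤ M - 1 := hk2
          exact_mod_cast this
        have h4 : (n : ℝ) * a i < (M : ℝ) := by
          linarith [Int.lt_floor_add_one ((n : ℝ) * a i)]
        have h5 : (n : ℝ) < (M : ℝ) * (a i)⁻¹ := by
          rw [← div_eq_mul_inv]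
          exact (lt_div_iff₀ (hpos i)).mpr h4
        have h6 : (n : ℤ) < ⌈(M : ℝ) * (a i)⁻¹⌉ := Int.lt_ceil.mpr (by exact_mod_cast h5)
        have h7 : (n : ℤ) ≤ c i := by simp only [hc]; omega
        omega
    have hdisjF : ∀ i ∈ (univ : Finset (Fin 3)), ∀ j ∈ univ, i ≠ j → Disjoint (F i) (F j) := by
      intro i _ j _ hij
      rw [Finset.disjoint_left]
      intro k hki hkj
      exact Set.disjoint_left.mp (hdisj i j hij) ((hmem i k).mp hki).1 ((hmem j k).mp hkj).1
    have hUnion : Finset.Icc (1 : ℤ) (M - 1) = univ.biUnion F := by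
      ext k
      simp only [Finset.mem_Icc, Finset.mem_biUnion, Finset.mem_univ, true_and]
      constructor
      · rintro ⟨hk1, hk2⟩
        have hk : k ∈ {k : ℤ | 0 < k} := by simp only [Set.mem_setOf_eq]; omega
        rw [← hunion] at hk
        obtain ⟨i, hki⟩ := Set.mem_iUnion.mp hk
        exact ⟨i, (hmem i k).mpr ⟨hki, hk1, hk2⟩⟩
      · rintro ⟨i, hki⟩
        exact ((hmem i k).mp hki).2
    have hcardF : ∀ i, (F i).card = (c i).toNat := by
      intro i
      simp only [hF]
      rw [Finset.card_image_of_injOn, Nat.card_Icc]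
      · omega
      · intro n hn m' hm' hnm
        simp only [Finset.coe_Icc, Set.mem_Icc] at hn hm'
        by_contra hne
        rcases lt_or_gt_of_ne hne with h | h
        · exact absurd hnm (ne_of_lt (floor_lt_floor_of_lt (hgt1 i) h))
        · exact absurd hnm.symm (ne_of_lt (floor_lt_floor_of_lt (hgt1 i) h))
    have hcardT : (Finset.Icc (1 : ℤ) (M - 1)).card = (M - 1).toNat := by
      rw [Int.card_Icc]
      congr 1
      omega
    have hsum : (M - 1).toNat = (c 0).toNat + (c 1).toNat + (c 2).toNat := by
      have h1 := Finset.card_biUnion hdisjF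
      rw [← hUnion, hcardT] at h1
      rw [h1, Fin.sum_univ_three, hcardF 0, hcardF 1, hcardF 2]
    have e0 : c 0 = ⌈(M : ℝ) * (a 0)⁻¹⌉ - 1 := rfl
    have e1 : c 1 = ⌈(M : ℝ) * (a 1)⁻¹⌉ - 1 := rfl
    have e2 : c 2 = ⌈(M : ℝ) * (a 2)⁻¹⌉ - 1 := rfl
    have g0 := hc0 0
    have g1 := hc0 1
    have g2 := hc0 2
    omega
  exact no_three (a 0)⁻¹ (a 1)⁻¹ (a 2)⁻¹
    (inv_pos.mpr (hpos 0)) (inv_lt_one_of_one_lt₀ (hgt1 0))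
    (inv_pos.mpr (hpos 1)) (inv_lt_one_of_one_lt₀ (hgt1 1))
    (inv_pos.mpr (hpos 2)) (inv_lt_one_of_one_lt₀ (hgt1 2))
    hcount
end

section
/- Let m ≥ 1 and let a₁, …, a_m be positive real numbers such that aⱼ/aₖ is irrational whenever j ≠ k. Define Aⱼ = { ∑_{k=1}^m ⌊n·aⱼ/aₖ⌋ : n ∈ ℕ, n ≥ 1 } for j = 1, …, m. Then the sets A₁, …, A_m are pairwise disjoint. -/
lemma tamura_aux (m : ℕ) (a : Fin m → ℝ) (ha : ∀ i, 0 < a i) (i j : Fin m)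
    (n n' : ℕ) (h : (n : ℝ) * a i < (n' : ℝ) * a j) :
    ∑ k, ⌊(n : ℝ) * a i / a k⌋ < ∑ k, ⌊(n' : ℝ) * a j / a k⌋ := by
  apply Finset.sum_lt_sum
  · intro k _
    exact Int.floor_le_floor ((div_le_div_iff_of_pos_right (ha k)).mpr h.le)
  · refine ⟨j, Finset.mem_univ j, ?_⟩
    have h1 : (n : ℝ) * a i / a j < (n' : ℤ) := by
      rw [div_lt_iff₀ (ha j)]
      push_cast
      exact h
    have h2 : ⌊(n : ℝ) * a i / a j⌋ < (n' : ℤ) := Int.floor_lt.mpr h1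
    have h3 : (n' : ℝ) * a j / a j = (n' : ℝ) := by
      rw [mul_div_assoc, div_self (ha j).ne', mul_one]
    rw [h3]
    simpa using h2

theorem tamura_disjoint (m : ℕ) (hm : 1 ≤ m) (a : Fin m → ℝ)
    (ha : ∀ i, 0 < a i)
    (hirr : ∀ j k : Fin m, j ≠ k → Irrational (a j / a k)) :
    ∀ i j : Fin m, i ≠ j →
      Disjoint {l : ℤ | ∃ n : ℕ, 0 < n ∧ ∑ k, ⌊(n : ℝ) * a i / a k⌋ = l}
               {l : ℤ | ∃ n : ℕ, 0 < n ∧ ∑ k, ⌊(n : ℝ) * a j / a k⌋ = l} := by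
  intro i j hij
  rw [Set.disjoint_left]
  rintro l ⟨n, hn, hni⟩ ⟨n', hn', hnj⟩
  rcases lt_trichotomy ((n : ℝ) * a i) ((n' : ℝ) * a j) with h | h | h
  · exact absurd (hni.trans hnj.symm) (tamura_aux m a ha i j n n' h).ne
  · -- equal case: a i / a j = n' / n rational, contradiction
    have hq : a i / a j = (n' : ℝ) / (n : ℝ) := by
      rw [div_eq_div_iff (ha j).ne' (by positivity : ((n : ℝ)) ≠ 0)]
      linarith
    have : Irrational ((n' : ℝ) / (n : ℝ)) := hq ▸ hirr i j hij
    exact this ⟨(n' : ℚ) / (n : ℚ), by push_cast; ring⟩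
  · exact absurd (hnj.trans hni.symm) (tamura_aux m a ha j i n' n h).ne
end

section
/- Let m ≥ 1 and let a₁, …, a_m be positive real numbers such that aⱼ/aₖ is irrational whenever j ≠ k. Define Aⱼ = { ∑_{k=1}^m ⌊n·aⱼ/aₖ⌋ : n ∈ ℕ, n ≥ 1 }. Then A₁ ∪ ⋯ ∪ A_m equals the set of all positive integers. -/
/-!
By irrationality the multiples `n • aₖ` (`n ≥ 1`) are pairwise distinct, and `∑ₖ ⌊x / aₖ⌋` counts
those that are `≤ x`. So `∑ₖ ⌊n aⱼ / aₖ⌋` is the rank of `n aⱼ` among all of them, and the ranks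
of an infinite family of distinct reals with finitely many terms below each bound are exactly the
positive integers: below any given term the rank is injective, hence onto `{1, …, card}`.
-/

open Finset Function

section Rank

variable {ι α : Type*} [LinearOrder α] {e : ι → α}

theorem ncard_setOf_le_lt_of_lt (hfin : ∀ x, {i | e i ≤ x}.Finite) {j k : ι} (h : e j < e k) :
    {i | e i ≤ e j}.ncard < {i | e i ≤ e k}.ncard :=
  Set.ncard_lt_ncard ((Set.ssubset_iff_of_subset fun _ hi => le_trans hi h.le).mpr
    ⟨k, le_rfl, h.not_ge⟩) (hfin _)

theorem exists_ncard_setOf_le_eq [Infinite ι] (he : Injective e)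
    (hfin : ∀ x, {i | e i ≤ x}.Finite) {n : ℕ} (hn : 0 < n) :
    ∃ i, {j | e j ≤ e i}.ncard = n := by
  obtain ⟨s, rfl⟩ := Infinite.exists_subset_card_eq ι n
  obtain ⟨i, -, hi⟩ := s.exists_max_image e (card_pos.mp hn)
  set F := (hfin (e i)).toFinset
  have rank_mem : ∀ j ∈ F, {k | e k ≤ e j}.ncard ∈ Icc 1 #F := by
    intro j hj
    rw [Set.Finite.mem_toFinset] at hj
    rw [mem_Icc, ← Set.ncard_eq_toFinset_card _ (hfin _)]
    exact ⟨(Set.ncard_pos (hfin _)).mpr ⟨j, le_rfl⟩,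
      Set.ncard_le_ncard (fun _ hk => le_trans hk hj) (hfin _)⟩
  have rank_inj : ∀ j k, j ∈ F → k ∈ F →
      {l | e l ≤ e j}.ncard = {l | e l ≤ e k}.ncard → j = k := by
    intro j k _ _ hjk
    by_contra hne
    rcases (he.ne hne).lt_or_gt with h | h
    · exact (ncard_setOf_le_lt_of_lt hfin h).ne hjk
    · exact (ncard_setOf_le_lt_of_lt hfin h).ne' hjk
  have hsF : s ⊆ F := fun j hj => by simpa [F] using hi j hj
  obtain ⟨j, -, hj⟩ := surj_on_of_inj_on_of_card_le (fun j _ => {k | e k ≤ e j}.ncard)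
    rank_mem rank_inj (by simp) #s (mem_Icc.mpr ⟨hn, card_le_card hsF⟩)
  exact ⟨j, hj.symm⟩

end Rank

namespace Tamura

variable {ι : Type*} {a : ι → ℝ}

-- `⟨k, n⟩` stands for the multiple `(n + 1) • a k`, so that `n` ranges over all of `ℕ`.
def multiple (a : ι → ℝ) (p : Σ _ : ι, ℕ) : ℝ := ((p.2 + 1 : ℕ) : ℝ) * a p.1

theorem multiple_injective (ha : ∀ i, a i ≠ 0)
    (hirr : Pairwise fun j k => Irrational (a j / a k)) : Injective (multiple a) := by
  rintro ⟨j, s⟩ ⟨k, t⟩ h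
  simp only [multiple] at h
  obtain rfl | hjk := eq_or_ne j k
  · have : s + 1 = t + 1 := by exact_mod_cast mul_right_cancel₀ (ha j) h
    rw [Nat.add_right_cancel this]
  · refine (hirr hjk ⟨(t + 1) / (s + 1), ?_⟩).elim
    push_cast at h ⊢
    rw [div_eq_div_iff (by positivity) (ha k)]
    linarith

variable [Fintype ι]

theorem setOf_multiple_le (ha : ∀ i, 0 < a i) (x : ℝ) :
    {p | multiple a p ≤ x} = ↑(univ.sigma fun k => range ⌊x / a k⌋₊) := by
  ext ⟨k, n⟩
  simp [multiple, Nat.lt_iff_add_one_le, Nat.le_floor_iff' n.succ_ne_zero, le_div_iff₀ (ha k)]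

theorem finite_setOf_multiple_le (ha : ∀ i, 0 < a i) (x : ℝ) :
    {p | multiple a p ≤ x}.Finite :=
  setOf_multiple_le ha x ▸ Finset.finite_toSet _

theorem sum_floor_eq_ncard (ha : ∀ i, 0 < a i) (j : ι) (n : ℕ) :
    ∑ k, ⌊((n + 1 : ℕ) : ℝ) * a j / a k⌋ = {p | multiple a p ≤ multiple a ⟨j, n⟩}.ncard := by
  rw [setOf_multiple_le ha, Set.ncard_coe_finset, card_sigma, Nat.cast_sum]
  refine sum_congr rfl fun k _ => ?_
  rw [card_range, multiple, Int.natCast_floor_eq_floor]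
  have := ha j; have := ha k
  positivity

end Tamura

open Tamura in
theorem tamura_cover (m : ℕ) (hm : 1 ≤ m) (a : Fin m → ℝ)
    (ha : ∀ i, 0 < a i)
    (hirr : ∀ j k : Fin m, j ≠ k → Irrational (a j / a k)) :
    (⋃ j : Fin m, {l : ℤ | ∃ n : ℕ, 0 < n ∧ ∑ k, ⌊(n : ℝ) * a j / a k⌋ = l})
      = {l : ℤ | 0 < l} := by
  have : Nonempty (Fin m) := ⟨⟨0, hm⟩⟩
  ext l
  simp only [Set.mem_iUnion, Set.mem_ofPred_eq]
  constructor
  · rintro ⟨j, n, hn, rfl⟩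
    obtain ⟨n, rfl⟩ := Nat.exists_eq_add_one_of_ne_zero hn.ne'
    rw [sum_floor_eq_ncard ha]
    exact_mod_cast (Set.ncard_pos (finite_setOf_multiple_le ha _)).mpr ⟨⟨j, n⟩, Set.mem_ofPred.mpr le_rfl⟩
  · intro hl
    obtain ⟨⟨j, n⟩, hjn⟩ := exists_ncard_setOf_le_eq
      (multiple_injective (fun i => (ha i).ne') fun j k => hirr j k)
      (finite_setOf_multiple_le ha) (show 0 < l.toNat by omega)
    refine ⟨j, n + 1, n.succ_pos, ?_⟩
    rw [sum_floor_eq_ncard ha, hjn]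
    omega
end

section
/- Let m ≥ 1 and let a₁, …, a_m be positive real numbers such that aⱼ/aₖ is irrational for j ≠ k. Then the sets Aⱼ = { ∑_{k=1}^m ⌊n·aⱼ/aₖ⌋ : n ≥ 1 }, j = 1, …, m, partition the set of positive integers. -/
open Finset

section TamuraAux

variable {m : ℕ} {a : Fin m → ℝ}

/-- The set of "values" n * a j, n ≥ 1. -/
private def IsVal (a : Fin m → ℝ) (x : ℝ) : Prop :=
  ∃ j : Fin m, ∃ n : ℕ, 1 ≤ n ∧ (n : ℝ) * a j = x

/-- The counting function: rank of x among the values. -/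
private noncomputable def cnt (a : Fin m → ℝ) (x : ℝ) : ℤ := ∑ k, ⌊x / a k⌋

private lemma isVal_pos (ha : ∀ i, 0 < a i) {x : ℝ} (hx : IsVal a x) : 0 < x := by
  obtain ⟨j, n, hn, rfl⟩ := hx
  have h1 : (0:ℝ) < (n:ℝ) := by exact_mod_cast hn
  exact mul_pos h1 (ha j)

private lemma val_inj (ha : ∀ i, 0 < a i)
    (hirr : ∀ j k : Fin m, j ≠ k → Irrational (a j / a k))
    {j j' : Fin m} {n n' : ℕ} (hn : 1 ≤ n) (hn' : 1 ≤ n')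
    (h : (n : ℝ) * a j = (n' : ℝ) * a j') : j = j' ∧ n = n' := by
  have hn0 : (n:ℝ) ≠ 0 := by positivity
  have hn0' : (n':ℝ) ≠ 0 := by positivity
  have hj : j = j' := by
    by_contra hne
    apply hirr j j' hne
    refine ⟨(n' : ℚ) / (n : ℚ), ?_⟩
    have haj' : a j' ≠ 0 := (ha j').ne'
    push_cast
    field_simp
    linarith [h]
  subst hj
  refine ⟨rfl, ?_⟩
  have : (n:ℝ) = (n':ℝ) := mul_right_cancel₀ (ha j).ne' h
  exact_mod_cast this

private lemma finite_vals (ha : ∀ i, 0 < a i) (B : ℝ) :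
    {x : ℝ | IsVal a x ∧ x ≤ B}.Finite := by
  have hsub : {x : ℝ | IsVal a x ∧ x ≤ B} ⊆
      ⋃ j : Fin m, (fun n : ℕ => (n : ℝ) * a j) '' (Set.Iic ⌈B / a j⌉₊ : Set ℕ) := by
    rintro x ⟨⟨j, n, hn, rfl⟩, hle⟩
    refine Set.mem_iUnion.2 ⟨j, ⟨n, ?_, rfl⟩⟩
    have h1 : (n:ℝ) ≤ B / a j := (le_div_iff₀ (ha j)).2 hle
    have h2 : (n:ℝ) ≤ (⌈B / a j⌉₊ : ℝ) := h1.trans (Nat.le_ceil _)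
    exact_mod_cast h2
  exact Set.Finite.subset (Set.finite_iUnion fun j => (Set.finite_Iic _).image _) hsub

private lemma cnt_lt (ha : ∀ i, 0 < a i) {x : ℝ} {j' : Fin m} {n' : ℕ}
    (hx : 0 < x) (h : x < (n' : ℝ) * a j') :
    cnt a x < cnt a ((n' : ℝ) * a j') := by
  refine Finset.sum_lt_sum (fun k _ => ?_) ⟨j', Finset.mem_univ j', ?_⟩
  · exact Int.floor_le_floor (by gcongr; exact (ha k).le)
  · have h1 : ((n' : ℝ) * a j') / a j' = (n' : ℝ) := mul_div_cancel_right₀ _ (ha j').ne'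
    rw [h1, Int.floor_natCast, Int.floor_lt]
    rw [div_lt_iff₀ (ha j')]
    push_cast
    linarith

private lemma one_le_cnt (ha : ∀ i, 0 < a i) {j : Fin m} {n : ℕ} (hn : 1 ≤ n) :
    1 ≤ cnt a ((n : ℝ) * a j) := by
  have hx : (0:ℝ) < (n:ℝ) * a j := by
    have : (0:ℝ) < (n:ℝ) := by exact_mod_cast hn
    exact mul_pos this (ha j)
  have hterm : ⌊((n : ℝ) * a j) / a j⌋ = (n : ℤ) := by
    rw [mul_div_cancel_right₀ _ (ha j).ne', Int.floor_natCast]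
  have hle : ⌊((n : ℝ) * a j) / a j⌋ ≤ cnt a ((n : ℝ) * a j) := by
    refine Finset.single_le_sum (f := fun k => ⌊((n : ℝ) * a j) / a k⌋)
      (fun k _ => ?_) (Finset.mem_univ j)
    exact Int.floor_nonneg.2 (div_nonneg hx.le (ha k).le)
  have h1 : (1:ℤ) ≤ (n:ℤ) := by exact_mod_cast hn
  rw [hterm] at hle
  linarith

private lemma exists_cnt (hm : 1 ≤ m) (ha : ∀ i, 0 < a i)
    (hirr : ∀ j k : Fin m, j ≠ k → Irrational (a j / a k)) :
    ∀ l : ℤ, 1 ≤ l → ∃ (j : Fin m) (n : ℕ), 1 ≤ n ∧ cnt a ((n : ℝ) * a j) = l := by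
  refine Int.le_induction ?_ ?_
  ·
    set j0 : Fin m := ⟨0, hm⟩ with hj0
    set S : Set ℝ := {x : ℝ | IsVal a x ∧ x ≤ a j0} with hS
    have hSne : S.Nonempty := ⟨a j0, ⟨j0, 1, le_refl 1, by simp⟩, le_refl _⟩
    obtain ⟨x0, hx0S, hmin⟩ := Set.exists_min_image S id (finite_vals ha _) hSne
    simp only [id] at hmin
    have hglobal : ∀ v, IsVal a v → x0 ≤ v := by
      intro v hv
      rcases le_or_gt v (a j0) with h | h
      · exact hmin v ⟨hv, h⟩
      · exact le_trans hx0S.2 h.le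
    obtain ⟨jx, nx, hnx, hval⟩ := hx0S.1
    have hnx1 : nx = 1 := by
      by_contra hne
      have h2 : 2 ≤ nx := by omega
      have h2' : (2:ℝ) ≤ (nx:ℝ) := by exact_mod_cast h2
      have hlt : a jx < x0 := by
        rw [← hval]; nlinarith [ha jx]
      have := hglobal (a jx) ⟨jx, 1, le_refl 1, by simp⟩
      linarith
    subst hnx1
    refine ⟨jx, 1, le_refl 1, ?_⟩
    have hx0 : ((1:ℕ):ℝ) * a jx = x0 := hval
    unfold cnt
    rw [Finset.sum_eq_single_of_mem jx (Finset.mem_univ jx)]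
    · rw [show ((1:ℕ):ℝ) * a jx = a jx by simp, div_self (ha jx).ne']
      exact Int.floor_one
    · intro k _ hk
      rw [show ((1:ℕ):ℝ) * a jx = a jx by simp, Int.floor_eq_zero_iff]
      constructor
      · have := ha jx; have := ha k; positivity
      · rw [div_lt_one (ha k)]
        have hle : x0 ≤ a k := hglobal (a k) ⟨k, 1, le_refl 1, by simp⟩
        have hne : a jx ≠ a k := by
          intro heq
          have : jx = k := (val_inj ha hirr (le_refl 1) (le_refl 1)
            (show ((1:ℕ):ℝ) * a jx = ((1:ℕ):ℝ) * a k by simp [heq])).1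
          exact hk this.symm
        have : a jx ≤ a k := by rw [show a jx = x0 by simpa using hval]; exact hle
        exact lt_of_le_of_ne this hne
  · intro l hl ih
    obtain ⟨j, n, hn, hcnt⟩ := ih
    set x : ℝ := (n:ℝ) * a j with hxdef
    have hxpos : 0 < x := isVal_pos ha ⟨j, n, hn, rfl⟩
    set W : Set ℝ := {v : ℝ | IsVal a v ∧ x < v ∧ v ≤ x + a j} with hW
    have hWfin : W.Finite := (finite_vals ha (x + a j)).subset (fun v hv => ⟨hv.1, hv.2.2⟩)
    have hWne : W.Nonempty := by
      refine ⟨((n+1:ℕ):ℝ) * a j, ⟨j, n+1, by omega, rfl⟩, ?_, ?_⟩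
      · push_cast; nlinarith [ha j]
      · push_cast; nlinarith [ha j]
    obtain ⟨x', hx'W, hmin⟩ := Set.exists_min_image W id hWfin hWne
    simp only [id] at hmin
    obtain ⟨⟨j', n', hn', hval'⟩, hgt, hle⟩ := hx'W
    subst hval'
    have key : ∀ k : Fin m,
        ⌊(((n':ℕ):ℝ) * a j') / a k⌋ = ⌊x / a k⌋ + (if k = j' then 1 else 0) := by
      intro k
      by_cases hk : k = j'
      · subst hk
        rw [if_pos rfl, mul_div_cancel_right₀ _ (ha k).ne', Int.floor_natCast]
        have hfl : ⌊x / a k⌋ = (n' : ℤ) - 1 := by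
          rw [Int.floor_eq_iff]
          constructor
          · rcases Nat.lt_or_ge n' 2 with h2 | h2
            · have : n' = 1 := by omega
              subst this
              have : (0:ℝ) ≤ x / a k := le_of_lt (div_pos hxpos (ha k))
              push_cast
              linarith
            · have hvlt : ((n' - 1:ℕ):ℝ) * a k < ((n':ℕ):ℝ) * a k := by
                have : ((n'-1:ℕ):ℝ) < ((n':ℕ):ℝ) := by
                  exact_mod_cast Nat.sub_lt (by omega) one_pos
                exact mul_lt_mul_of_pos_right this (ha k)
              have hvle : ((n' - 1:ℕ):ℝ) * a k ≤ x := by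
                by_contra hcon
                push_neg at hcon
                have hmem : ((n' - 1:ℕ):ℝ) * a k ∈ W :=
                  ⟨⟨k, n' - 1, by omega, rfl⟩, hcon, by linarith⟩
                have := hmin _ hmem
                linarith
              have hcast : ((n' - 1:ℕ):ℝ) = (n':ℝ) - 1 := by
                push_cast [Nat.cast_sub hn']; ring
              rw [hcast] at hvle
              rw [le_div_iff₀ (ha k)]
              push_cast
              linarith
          · rw [div_lt_iff₀ (ha k)]
            push_cast
            linarith
        omega
      · rw [if_neg hk, add_zero]
        have hmono : ⌊x / a k⌋ ≤ ⌊(((n':ℕ):ℝ) * a j') / a k⌋ :=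
          Int.floor_le_floor (by gcongr <;> first | exact (ha k).le | exact hgt.le)
        rcases eq_or_lt_of_le hmono with h | h
        · exact h.symm
        · exfalso
          set p : ℤ := ⌊(((n':ℕ):ℝ) * a j') / a k⌋ with hp
          have hp0 : 0 < p := by
            have : (0:ℤ) ≤ ⌊x / a k⌋ := Int.floor_nonneg.2 (le_of_lt (div_pos hxpos (ha k)))
            omega
          have hptoNat : ((p.toNat:ℕ):ℝ) = (p:ℝ) := by
            exact_mod_cast Int.toNat_of_nonneg hp0.le
          have hpgt : x < (p:ℝ) * a k := by
            rw [← div_lt_iff₀ (ha k)]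
            exact Int.floor_lt.1 h
          have hple : (p:ℝ) * a k ≤ ((n':ℕ):ℝ) * a j' := by
            rw [← le_div_iff₀ (ha k)]
            exact Int.floor_le _
          have hvalp : IsVal a ((p:ℝ) * a k) := by
            refine ⟨k, p.toNat, by omega, ?_⟩
            rw [hptoNat]
          have hnep : (p:ℝ) * a k ≠ ((n':ℕ):ℝ) * a j' := by
            intro heq
            have hcast : ((p.toNat:ℕ):ℝ) * a k = ((n':ℕ):ℝ) * a j' := by
              rw [hptoNat]; exact heq
            exact hk (val_inj ha hirr (by omega) hn' hcast).1
          have hplt : (p:ℝ) * a k < ((n':ℕ):ℝ) * a j' := lt_of_le_of_ne hple hnep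
          have hmem : (p:ℝ) * a k ∈ W := ⟨hvalp, hpgt, by linarith⟩
          have := hmin _ hmem
          linarith
    refine ⟨j', n', hn', ?_⟩
    unfold cnt
    calc ∑ k, ⌊(((n':ℕ):ℝ) * a j') / a k⌋
        = ∑ k, (⌊x / a k⌋ + if k = j' then 1 else 0) :=
          Finset.sum_congr rfl (fun k _ => key k)
      _ = (∑ k, ⌊x / a k⌋) + ∑ k, (if k = j' then (1:ℤ) else 0) := Finset.sum_add_distrib
      _ = l + 1 := by
          have hx' : (∑ k, ⌊x / a k⌋) = l := hcnt
          rw [hx']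
          simp

end TamuraAux

theorem tamura (m : ℕ) (hm : 1 ≤ m) (a : Fin m → ℝ)
    (ha : ∀ i, 0 < a i)
    (hirr : ∀ j k : Fin m, j ≠ k → Irrational (a j / a k)) :
    (∀ i j : Fin m, i ≠ j →
      Disjoint {l : ℤ | ∃ n : ℕ, 0 < n ∧ ∑ k, ⌊(n : ℝ) * a i / a k⌋ = l}
               {l : ℤ | ∃ n : ℕ, 0 < n ∧ ∑ k, ⌊(n : ℝ) * a j / a k⌋ = l}) ∧
    (⋃ j : Fin m, {l : ℤ | ∃ n : ℕ, 0 < n ∧ ∑ k, ⌊(n : ℝ) * a j / a k⌋ = l})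
      = {l : ℤ | 0 < l} := by
  constructor
  · intro i j hij
    rw [Set.disjoint_left]
    rintro l ⟨n, hn, hni⟩ ⟨n', hn', hnj⟩
    have h1 : cnt a ((n:ℝ) * a i) = l := hni
    have h2 : cnt a ((n':ℝ) * a j) = l := hnj
    have hne : (n:ℝ) * a i ≠ (n':ℝ) * a j := fun h => hij (val_inj ha hirr hn hn' h).1
    rcases lt_or_gt_of_ne hne with h | h
    · have hlt := cnt_lt ha (isVal_pos ha ⟨i, n, hn, rfl⟩) h
      rw [h1, h2] at hlt
      exact lt_irrefl l hlt
    · have hlt := cnt_lt ha (isVal_pos ha ⟨j, n', hn', rfl⟩) h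
      rw [h1, h2] at hlt
      exact lt_irrefl l hlt
  · ext l
    simp only [Set.mem_iUnion, Set.mem_setOf_eq]
    constructor
    · rintro ⟨j, n, hn, rfl⟩
      have h2 : 1 ≤ ∑ k, ⌊(n:ℝ) * a j / a k⌋ := one_le_cnt ha (j := j) hn
      omega
    · intro hl
      obtain ⟨j, n, hn, hcnt⟩ := exists_cnt hm ha hirr l (by omega)
      exact ⟨j, n, hn, hcnt⟩
end

section
/- Let a₁, …, a_m be positive reals with aⱼ/aₖ irrational for j ≠ k, and let N(T) denote the number of pairs (j, n) with 1 ≤ j ≤ m, n ≥ 1, and ∑_{k=1}^m ⌊n·aⱼ/aₖ⌋ ≤ T. Then N(T) = T for every positive integer T. -/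
/-!
The sum `∑ k, ⌊n * a j / a k⌋` counts the pairs `(k, n')` with `n' ≥ 1` and
`n' * a k ≤ n * a j`: it is the rank of `n * a j` among all positive multiples of the `a k`.
By irrationality of the ratios these multiples are pairwise distinct, and every bounded range
contains only finitely many of them. The ranks of such an infinite family run through
`1, 2, 3, …` bijectively, so exactly `T` pairs have rank at most `T`.
-/

section RankBy

variable {α β : Type*} [LinearOrder β] (P : Set α) (v : α → β)

noncomputable def rankBy (p : α) : ℕ := {q ∈ P | v q ≤ v p}.ncard

variable {P v}

theorem one_le_rankBy (hfin : ∀ t, {q ∈ P | v q ≤ t}.Finite) {p : α} (hp : p ∈ P) :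
    1 ≤ rankBy P v p :=
  (Set.ncard_pos (hfin (v p))).mpr ⟨p, hp, le_rfl⟩

theorem rankBy_lt_rankBy (hfin : ∀ t, {q ∈ P | v q ≤ t}.Finite) {p q : α} (hq : q ∈ P)
    (h : v p < v q) : rankBy P v p < rankBy P v q := by
  refine Set.ncard_lt_ncard ⟨fun x hx => ⟨hx.1, hx.2.trans h.le⟩, fun hsub => ?_⟩ (hfin (v q))
  exact (hsub ⟨hq, le_rfl⟩).2.not_gt h

theorem rankBy_injOn (hinj : Set.InjOn v P) (hfin : ∀ t, {q ∈ P | v q ≤ t}.Finite) :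
    Set.InjOn (rankBy P v) P := by
  intro p hp q hq hpq
  rcases lt_trichotomy (v p) (v q) with h | h | h
  · exact absurd hpq (rankBy_lt_rankBy hfin hq h).ne
  · exact hinj hp hq h
  · exact absurd hpq (rankBy_lt_rankBy hfin hp h).ne'

/-- The largest of any `n + 1` elements of `P` has rank at least `n + 1`. -/
theorem exists_lt_rankBy (hfin : ∀ t, {q ∈ P | v q ≤ t}.Finite) (hinf : P.Infinite) (n : ℕ) :
    ∃ p ∈ P, n < rankBy P v p := by
  obtain ⟨s, hsP, hcard⟩ := hinf.exists_subset_card_eq (n + 1)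
  obtain ⟨p, hps, hmax⟩ := s.exists_max_image v (Finset.card_pos.mp (by omega))
  refine ⟨p, hsP hps, ?_⟩
  calc n < s.card := by omega
    _ = (s : Set α).ncard := (Set.ncard_coe_finset s).symm
    _ ≤ rankBy P v p := Set.ncard_le_ncard (fun q hq => ⟨hsP hq, hmax q hq⟩) (hfin (v p))

/-- If `c` has the least rank above `T`, the elements of rank at most `T` are exactly those
below `c`; so there are `rankBy P v c - 1 ≥ T` of them, while injectivity of the rank bounds
their number by `T`. -/
theorem ncard_setOf_rankBy_le (hinj : Set.InjOn v P) (hfin : ∀ t, {q ∈ P | v q ≤ t}.Finite)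
    (hinf : P.Infinite) (T : ℕ) : {p ∈ P | rankBy P v p ≤ T}.ncard = T := by
  set S := {p ∈ P | rankBy P v p ≤ T}
  have hS_le : S.ncard ≤ T := by
    calc S.ncard ≤ (Set.Icc 1 T).ncard :=
          Set.ncard_le_ncard_of_injOn (rankBy P v) (fun p hp => ⟨one_le_rankBy hfin hp.1, hp.2⟩)
            ((rankBy_injOn hinj hfin).mono fun _ hp => hp.1) (Set.finite_Icc 1 T)
      _ = T := by simp
  obtain ⟨c, ⟨hcP, hcT⟩, hcmin⟩ := (InvImage.wf (rankBy P v) wellFounded_lt).has_min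
    {p ∈ P | T < rankBy P v p} ((exists_lt_rankBy hfin hinf T).imp fun _ => id)
  have hlower : {q ∈ P | v q ≤ v c} = insert c S := by
    ext q
    constructor
    · rintro ⟨hqP, hqc⟩
      rcases hqc.lt_or_eq with hlt | heq
      · exact Or.inr ⟨hqP, not_lt.mp fun hTq => hcmin q ⟨hqP, hTq⟩ (rankBy_lt_rankBy hfin hcP hlt)⟩
      · exact Or.inl (hinj hqP hcP heq)
    · rintro (rfl | ⟨hqP, hqT⟩)
      · exact ⟨hcP, le_rfl⟩
      · exact ⟨hqP, not_lt.mp fun hcq => by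
          have := rankBy_lt_rankBy hfin hqP hcq; omega⟩
  have hrank : rankBy P v c = S.ncard + 1 := by
    have hSfin : S.Finite := (hlower ▸ hfin (v c)).subset (Set.subset_insert c S)
    rw [rankBy, hlower, Set.ncard_insert_of_notMem (fun hc => hc.2.not_gt hcT) hSfin]
  omega

end RankBy

theorem injOn_natCast_mul_of_irrational {ι : Type*} {a : ι → ℝ} (ha : ∀ i, a i ≠ 0)
    (hirr : ∀ j k, j ≠ k → Irrational (a j / a k)) :
    Set.InjOn (fun q : ι × ℕ => (q.2 : ℝ) * a q.1) {q | 0 < q.2} := by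
  rintro ⟨j, n⟩ hn ⟨k, n'⟩ - h
  simp only at h
  by_cases hjk : j = k
  · subst hjk
    rw [Nat.cast_injective (mul_right_cancel₀ (ha j) h)]
  · refine absurd ⟨(n' : ℚ) / n, ?_⟩ (hirr j k hjk)
    have hn : (n : ℝ) ≠ 0 := Nat.cast_ne_zero.mpr (Nat.pos_iff_ne_zero.mp hn)
    rw [Rat.cast_div, Rat.cast_natCast, Rat.cast_natCast, eq_div_iff (ha k), div_mul_eq_mul_div,
      div_eq_iff hn, ← h, mul_comm]

theorem setOf_natCast_mul_le_eq {ι : Type*} [Fintype ι] [DecidableEq ι] {a : ι → ℝ}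
    (ha : ∀ i, 0 < a i) (t : ℝ) :
    {q : ι × ℕ | 0 < q.2 ∧ (q.2 : ℝ) * a q.1 ≤ t}
      = ↑(Finset.univ.biUnion fun i => {i} ×ˢ Finset.Icc 1 ⌊t / a i⌋₊) := by
  ext ⟨i, n⟩
  simp only [Finset.coe_biUnion, Finset.coe_product, Finset.coe_Icc]
  simp [Nat.one_le_iff_ne_zero, Nat.pos_iff_ne_zero]
  exact fun hn => by rw [Nat.le_floor_iff' hn, le_div_iff₀ (ha i)]

theorem ncard_setOf_natCast_mul_le {ι : Type*} [Fintype ι] {a : ι → ℝ} (ha : ∀ i, 0 < a i)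
    (t : ℝ) : {q : ι × ℕ | 0 < q.2 ∧ (q.2 : ℝ) * a q.1 ≤ t}.ncard = ∑ i, ⌊t / a i⌋₊ := by
  classical
  rw [setOf_natCast_mul_le_eq ha, Set.ncard_coe_finset, Finset.card_biUnion]
  · simp
  · intro i _ j _ hij
    exact Finset.disjoint_product.mpr (Or.inl (Finset.disjoint_singleton.mpr hij))

theorem natCast_rankBy_eq_sum_floor {ι : Type*} [Fintype ι] {a : ι → ℝ} (ha : ∀ i, 0 < a i)
    (p : ι × ℕ) :
    (rankBy {q | 0 < q.2} (fun q : ι × ℕ => (q.2 : ℝ) * a q.1) p : ℤ)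
      = ∑ k, ⌊(p.2 : ℝ) * a p.1 / a k⌋ := by
  rw [rankBy, Set.sep_ofPred, ncard_setOf_natCast_mul_le ha, Nat.cast_sum]
  exact Finset.sum_congr rfl fun k _ => Int.natCast_floor_eq_floor
    (div_nonneg (mul_nonneg p.2.cast_nonneg (ha p.1).le) (ha k).le)

theorem tamura_counting_general (m : ℕ) (hm : 1 ≤ m) (a : Fin m → ℝ)
    (ha : ∀ i, 0 < a i)
    (hirr : ∀ j k : Fin m, j ≠ k → Irrational (a j / a k))
    (T : ℕ) :
    ({p : Fin m × ℕ | 0 < p.2 ∧ ∑ k, ⌊(p.2 : ℝ) * a p.1 / a k⌋ ≤ (T : ℤ)}).ncard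
      = T := by
  set P : Set (Fin m × ℕ) := {q | 0 < q.2}
  set v : Fin m × ℕ → ℝ := fun q => q.2 * a q.1
  have hfin (t : ℝ) : {q ∈ P | v q ≤ t}.Finite := by
    rw [Set.sep_ofPred, setOf_natCast_mul_le_eq ha t]
    exact Finset.finite_toSet _
  have hinf : P.Infinite :=
    Set.infinite_of_injective_forall_mem (f := fun n : ℕ => ((⟨0, hm⟩ : Fin m), n + 1))
      (fun _ _ h => by simpa using h) fun n => n.succ_pos
  have hset : {p : Fin m × ℕ | 0 < p.2 ∧ ∑ k, ⌊(p.2 : ℝ) * a p.1 / a k⌋ ≤ (T : ℤ)}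
      = {p ∈ P | rankBy P v p ≤ T} := by
    ext p
    simp only [Set.mem_ofPred_eq, ← natCast_rankBy_eq_sum_floor ha, Nat.cast_le]
    rfl
  rw [hset]
  exact ncard_setOf_rankBy_le (injOn_natCast_mul_of_irrational (fun i => (ha i).ne') hirr)
    hfin hinf T

theorem tamura_counting (m : ℕ) (hm : 1 ≤ m) (a : Fin m → ℝ)
    (ha : ∀ i, 0 < a i)
    (hirr : ∀ j k : Fin m, j ≠ k → Irrational (a j / a k))
    (T : ℕ) (hT : 0 < T) :
    ({p : Fin m × ℕ | 0 < p.2 ∧ ∑ k, ⌊(p.2 : ℝ) * a p.1 / a k⌋ ≤ (T : ℤ)}).ncard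
      = T :=
  tamura_counting_general m hm a ha hirr T
end

section
/- Let a, b be positive real numbers with a/b irrational. Then for all positive integers n and p, one has n + ⌊n·a/b⌋ ≠ p + ⌊p·b/a⌋. -/
/-!
Put `t = a / b`. Then `n + ⌊n t⌋ = ⌊n (1 + t)⌋` and `p + ⌊p / t⌋ = ⌊p (1 + 1/t)⌋` are terms of the
Beatty sequences of `1 + t` and `1 + 1/t`, whose reciprocals sum to `1`. By Rayleigh's theorem the
first sequence is complementary to the lower Beatty sequence `⌈k (1 + 1/t)⌉ - 1` of the second
exponent, and for irrational `t` and `k > 0` this agrees with `⌊k (1 + 1/t)⌋`.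
-/

theorem beattySeq_one_add (t : ℝ) (k : ℤ) : beattySeq (1 + t) k = k + ⌊k * t⌋ := by
  rw [beattySeq, mul_one_add, Int.floor_intCast_add]

theorem Real.holderConjugate_one_add_one_add_inv {t : ℝ} (ht : 0 < t) :
    (1 + t).HolderConjugate (1 + t⁻¹) := by
  refine Real.holderConjugate_iff.mpr ⟨lt_add_of_pos_right 1 ht, ?_⟩
  field_simp
  ring

theorem beattySeq_ne_beattySeq_of_irrational {r s : ℝ} (hrs : r.HolderConjugate s)
    (hs : Irrational s) (k : ℤ) {m : ℤ} (hm : 0 < m) : beattySeq r k ≠ beattySeq s m := by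
  intro h
  have hcompl : beattySeq s m ∈ {beattySeq r k | k}ᶜ := by
    rw [compl_beattySeq hrs]
    obtain ⟨j, -, hj⟩ : beattySeq s m ∈ {beattySeq' s k | k > 0} :=
      hs.beattySeq'_pos_eq ▸ ⟨m, hm, rfl⟩
    exact ⟨j, hj⟩
  exact hcompl ⟨k, h⟩

theorem tamura_two_disjoint_general (a b : ℝ) (ha : 0 < a) (hb : 0 < b)
    (hirr : Irrational (a / b)) (n p : ℕ) (hp : 0 < p) :
    (n : ℤ) + ⌊(n : ℝ) * (a / b)⌋ ≠ (p : ℤ) + ⌊(p : ℝ) * (b / a)⌋ := by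
  have hs : Irrational (1 + (a / b)⁻¹) := by simpa using hirr.inv.intCast_add 1
  have hne := beattySeq_ne_beattySeq_of_irrational
    (Real.holderConjugate_one_add_one_add_inv (div_pos ha hb)) hs n (Int.natCast_pos.mpr hp)
  rwa [beattySeq_one_add, beattySeq_one_add, inv_div, Int.cast_natCast, Int.cast_natCast] at hne

theorem tamura_two_disjoint (a b : ℝ) (ha : 0 < a) (hb : 0 < b)
    (hirr : Irrational (a / b)) (n p : ℕ) (hn : 0 < n) (hp : 0 < p) :
    (n : ℤ) + ⌊(n : ℝ) * (a / b)⌋ ≠ (p : ℤ) + ⌊(p : ℝ) * (b / a)⌋ :=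
  tamura_two_disjoint_general a b ha hb hirr n p hp
end

section
/- Let α and β be positive reals with 1/α + 1/β = 1 and α rational. Then the sets {⌊nα⌋ : n ≥ 1} and {⌊nβ⌋ : n ≥ 1} do not partition the positive integers (either they intersect or they fail to cover some positive integer). -/
theorem beatty_rational_not_partition (α β : ℝ) (hα : 0 < α) (hβ : 0 < β)
    (hsum : 1/α + 1/β = 1) (hrat : ¬ Irrational α) :
    ¬ (Disjoint {k : ℤ | ∃ n : ℕ, 0 < n ∧ ⌊(n : ℝ) * α⌋ = k}
                {k : ℤ | ∃ n : ℕ, 0 < n ∧ ⌊(n : ℝ) * β⌋ = k} ∧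
       {k : ℤ | ∃ n : ℕ, 0 < n ∧ ⌊(n : ℝ) * α⌋ = k} ∪
         {k : ℤ | ∃ n : ℕ, 0 < n ∧ ⌊(n : ℝ) * β⌋ = k} = {k : ℤ | 0 < k}) := by
  rintro ⟨hdisj, -⟩
  -- α > 1
  have hα1 : 1 < α := by
    have h1 : 1/β > 0 := one_div_pos.2 hβ
    have h2 : 1/α < 1 := by linarith
    rwa [div_lt_one hα] at h2
  -- β = α/(α-1), i.e. (α-1)*β = α
  have hαne : α ≠ 0 := ne_of_gt hα
  have hβne : β ≠ 0 := ne_of_gt hβ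
  have hkey : (α - 1) * β = α := by
    field_simp at hsum
    nlinarith [hsum]
  -- α rational
  unfold Irrational at hrat
  rw [Set.not_notMem] at hrat
  obtain ⟨q, hq⟩ := hrat
  set a : ℤ := q.num with ha
  set b : ℤ := (q.den : ℤ) with hb
  have hbpos : (0:ℤ) < b := by rw [hb]; exact_mod_cast q.pos
  have hαab : α = (a : ℝ) / (b : ℝ) := by
    rw [← hq, Rat.cast_def, ha, hb]; norm_cast
  have hbR : (0:ℝ) < (b:ℝ) := by exact_mod_cast hbpos
  have hba : (b : ℝ) * α = (a : ℝ) := by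
    rw [hαab]; field_simp
  have hab : b < a := by
    have : (b:ℝ) < (a:ℝ) := by
      calc (b:ℝ) = (b:ℝ) * 1 := by ring
        _ < (b:ℝ) * α := by exact mul_lt_mul_of_pos_left hα1 hbR
        _ = a := hba
    exact_mod_cast this
  -- a is in the first set
  have hmem1 : a ∈ {k : ℤ | ∃ n : ℕ, 0 < n ∧ ⌊(n : ℝ) * α⌋ = k} := by
    refine ⟨q.den, q.pos, ?_⟩
    have : ((q.den : ℕ) : ℝ) * α = ((a : ℤ) : ℝ) := by
      rw [← hba]; norm_num [hb]
    rw [this, Int.floor_intCast]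
  -- a is in the second set
  have hmem2 : a ∈ {k : ℤ | ∃ n : ℕ, 0 < n ∧ ⌊(n : ℝ) * β⌋ = k} := by
    refine ⟨(a - b).toNat, ?_, ?_⟩
    · omega
    · have hcast : (((a - b).toNat : ℕ) : ℝ) = (a : ℝ) - (b : ℝ) := by
        have : ((a - b).toNat : ℤ) = a - b := Int.toNat_of_nonneg (by omega)
        exact_mod_cast this
      have : ((a:ℝ) - (b:ℝ)) * β = (a : ℝ) := by
        have h1 : (a:ℝ) - (b:ℝ) = (b:ℝ) * (α - 1) := by
          rw [← hba]; ring
        rw [h1, mul_assoc, mul_comm (α-1) β, mul_comm β (α-1), hkey, hba]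
      rw [hcast, this, Int.floor_intCast]
  exact Set.disjoint_left.mp hdisj hmem1 hmem2
end
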